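/- arXiv:1302.1170 — 3 statements merged into one kernel-verified Lean document; each statement's English description precedes it below -/
import Mathlib

section
/- Let X be a set, M : X → X, and s : ℕ → X → ℝ a subadditive cocycle (s_{n+m}(c) ≤ s_n(c) + s_m(M^n c)) with 0 ≤ s_n(c). Suppose β < α and n ≥ 1 are such that for every c ∈ X there exists 1 ≤ k ≤ n with s_k(c) ≤ β k. Then for every c and every m, s_m(c) ≤ β m + n. -/
/-! Cut an orbit segment of length `m` greedily: each starting point `c` admits a first block of
length `k ≤ n` on which `s` grows at rate at most `β`, and subadditivity lets the bound pass to
the rest of the segment starting at `M^[k] c`. Once at most `n` steps remain, the trivial bound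
`s m c ≤ m ≤ n` pays for the leftover; here `β ≥ 0` because `s ≥ 0`. -/

theorem cocycle_le_mul_add_of_forall_exists_le {X : Type*} (M : X → X) (s : ℕ → X → ℝ)
    (hsub : ∀ n m c, s (n + m) c ≤ s n c + s m (M^[n] c)) (β C : ℝ) (n : ℕ)
    (hstep : ∀ c : X, ∃ k, 1 ≤ k ∧ k ≤ n ∧ s k c ≤ β * k)
    (hbase : ∀ c m, m ≤ n → s m c ≤ β * m + C) (c : X) (m : ℕ) :
    s m c ≤ β * m + C := by
  induction m using Nat.strong_induction_on generalizing c with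
  | _ m ih =>
    rcases le_or_gt m n with hmn | hnm
    · exact hbase c m hmn
    obtain ⟨k, hk, hkn, hsk⟩ := hstep c
    have hkm : k ≤ m := by omega
    have hrest := ih (m - k) (by omega) (M^[k] c)
    have hsplit := hsub k (m - k) c
    rw [Nat.add_sub_cancel' hkm] at hsplit
    rw [Nat.cast_sub hkm] at hrest
    linarith

theorem subadditive_cocycle_linear_bound_general
    {X : Type*} (M : X → X) (s : ℕ → X → ℝ)
    (h0 : ∀ n c, 0 ≤ s n c) (h1 : ∀ n c, s n c ≤ n)
    (hsub : ∀ n m c, s (n + m) c ≤ s n c + s m (M^[n] c))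
    (β : ℝ)
    (n : ℕ)
    (hyp : ∀ c : X, ∃ k, 1 ≤ k ∧ k ≤ n ∧ s k c ≤ β * k) :
    ∀ (c : X) (m : ℕ), s m c ≤ β * m + n := by
  intro c
  have hβ : 0 ≤ β := by
    obtain ⟨k, hk, -, hsk⟩ := hyp c
    have hk' : (1 : ℝ) ≤ k := by exact_mod_cast hk
    nlinarith [h0 k c]
  refine cocycle_le_mul_add_of_forall_exists_le M s hsub β n n hyp (fun c m hmn => ?_) c
  calc s m c ≤ m := h1 m c
    _ ≤ n := by exact_mod_cast hmn
    _ ≤ β * m + n := le_add_of_nonneg_left (by positivity)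

/-- If every configuration has some `k ≤ n` with `s k c ≤ β k`, then
`s m c ≤ β m + n` for all `m`. -/
theorem subadditive_cocycle_linear_bound
    {X : Type*} (M : X → X) (s : ℕ → X → ℝ)
    (h0 : ∀ n c, 0 ≤ s n c) (h1 : ∀ n c, s n c ≤ n)
    (hsub : ∀ n m c, s (n + m) c ≤ s n c + s m (M^[n] c))
    (α β : ℝ) (hβα : β < α)
    (n : ℕ) (hn : 1 ≤ n)
    (hyp : ∀ c : X, ∃ k, 1 ≤ k ∧ k ≤ n ∧ s k c ≤ β * k) :
    ∀ (c : X) (m : ℕ), s m c ≤ β * m + n :=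
  subadditive_cocycle_linear_bound_general M s h0 h1 hsub β n hyp
end

section
/- Let X be a compact metric space, M : X → X continuous, and s : ℕ → X → ℝ a sequence of continuous functions with 0 ≤ s_n ≤ n, subadditive along M (s_{n+m}(c) ≤ s_n(c) + s_m(M^n c)), and taking integer values. Then there exists a configuration c ∈ X with s_n(c) ≥ α n for all n, where α = inf_n sup_c s_n(c)/n. In particular sup_c liminf s_n(c)/n = inf_n sup_c s_n(c)/n, and the supremum is attained. -/
/-!
Let `u n = max_c s n c`. Maximising over `c` keeps `u` subadditive, so by Fekete's lemma
`u n / n → α` and `α n ≤ u n` for all `n`. Because `u` is integer-valued, for every `K` there is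
a time `N ≥ K` with `u N - u (N - k) ≥ α k` for all `k ≤ K`: otherwise `u n - α n ≥ 0` would
gain a fixed `δ > 0` at each backward step of length at most `K`, and walking back from
arbitrarily large `N` would make it unbounded on `[0, K)`. A maximiser `c` of `s N` then has
`s k c ≥ u N - u (N - k) ≥ α k` for `k ≤ K` by subadditivity, and compactness gives one `c`
with `s k c ≥ α k` for all `k`. Squeezed between `α` and `u n / n`, `s n c / n` tends to `α`.
-/

open Filter Set Topology

theorem not_bddBelow_range_of_forall_exists_add_le_apply_sub {f : ℕ → ℝ} {K : ℕ} {δ : ℝ}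
    (hδ : 0 < δ) (hf : ∀ N, K ≤ N → ∃ k ≤ K, f N + δ ≤ f (N - k)) :
    ¬ BddBelow (range f) := by
  rintro ⟨b, hb⟩
  have hk_pos : ∀ {N k : ℕ}, f N + δ ≤ f (N - k) → 0 < k := fun {N k} h => by
    rcases Nat.eq_zero_or_pos k with rfl | hk
    · simp only [Nat.sub_zero] at h; linarith
    · exact hk
  obtain ⟨k, hkK, hk⟩ := hf K le_rfl
  have hK : (0 : ℝ) < K := by exact_mod_cast (hk_pos hk).trans_le hkK
  -- `f n + δ n / K` does not increase along the steps
  obtain ⟨C, hC⟩ := ((finite_Iio K).image fun n : ℕ => f n + δ * n / K).bddAbove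
  have hbound : ∀ N : ℕ, f N + δ * N / K ≤ C := by
    intro N
    induction N using Nat.strong_induction_on with
    | _ N ih =>
      rcases lt_or_ge N K with hNK | hNK
      · exact hC (mem_image_of_mem _ hNK)
      obtain ⟨k, hkK, hk⟩ := hf N hNK
      have hδk : δ * k / K ≤ δ := by
        rw [div_le_iff₀ hK]; gcongr
      calc f N + δ * N / K = f N + δ * k / K + δ * ↑(N - k) / K := by
            rw [Nat.cast_sub (hkK.trans hNK)]; ring
        _ ≤ f (N - k) + δ * ↑(N - k) / K := by linarith
        _ ≤ C := ih _ (Nat.sub_lt (lt_of_lt_of_le (hk_pos hk) (hkK.trans hNK)) (hk_pos hk))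
  obtain ⟨N, hN⟩ := exists_nat_gt ((C - b) * K / δ)
  have hNC : δ * N / K ≤ C - b := by linarith [hbound N, hb (mem_range_self N)]
  rw [div_lt_iff₀ hδ] at hN
  rw [div_le_iff₀ hK] at hNC
  linarith

theorem exists_ge_forall_mul_le_sub {u : ℕ → ℝ} {α : ℝ} (hint : ∀ n, ∃ z : ℤ, u n = z)
    (hαu : ∀ n : ℕ, α * n ≤ u n) (K : ℕ) :
    ∃ N, K ≤ N ∧ ∀ k ≤ K, α * k ≤ u N - u (N - k) := by
  by_contra! hcon
  -- an integer below `α k` lies at least `α k + 1 - ⌈α k⌉ > 0` below it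
  set δ := (Finset.range (K + 1)).inf' Finset.nonempty_range_add_one
    fun k : ℕ => α * k + 1 - ⌈α * k⌉
  have hδ : 0 < δ :=
    (Finset.lt_inf'_iff _).2 fun k _ => by linarith [Int.ceil_lt_add_one (α * k)]
  refine not_bddBelow_range_of_forall_exists_add_le_apply_sub (f := fun n => u n - α * n)
    (K := K) hδ (fun N hN => ?_) ⟨0, forall_mem_range.2 fun n => sub_nonneg.2 (hαu n)⟩
  obtain ⟨k, hkK, hk⟩ := hcon N hN
  refine ⟨k, hkK, ?_⟩
  obtain ⟨z, hz⟩ := hint N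
  obtain ⟨z', hz'⟩ := hint (N - k)
  have hceil : ((z - z' : ℤ) : ℝ) ≤ ⌈α * k⌉ - 1 := by
    have hlt : ((z - z' : ℤ) : ℝ) < α * k := by push_cast; rw [← hz, ← hz']; exact hk
    exact_mod_cast Int.le_sub_one_of_lt (Int.lt_ceil.2 hlt)
  have hδk : δ ≤ α * k + 1 - ⌈α * k⌉ :=
    Finset.inf'_le _ (Finset.mem_range.2 (Nat.lt_succ_of_le hkK))
  rw [Nat.cast_sub (hkK.trans hN)]
  push_cast at hceil
  linarith

theorem Continuous.exists_apply_eq_iSup {X : Type*} [TopologicalSpace X] [CompactSpace X]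
    [Nonempty X] {f : X → ℝ} (hf : Continuous f) : ∃ c, f c = ⨆ c, f c :=
  (isCompact_range hf).sSup_mem (range_nonempty f)

section Cocycle

variable {X : Type*} {s : ℕ → X → ℝ}

theorem bddBelow_range_iSup_div (h0 : ∀ n c, 0 ≤ s n c) :
    BddBelow (range fun n : ℕ => (⨆ c, s n c) / n) :=
  ⟨0, forall_mem_range.2 fun n => div_nonneg (Real.iSup_nonneg (h0 n)) n.cast_nonneg⟩

variable [TopologicalSpace X] [CompactSpace X] [Nonempty X] {M : X → X}

theorem subadditive_iSup (hcont : ∀ n, Continuous (s n))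
    (hsub : ∀ n m c, s (n + m) c ≤ s n c + s m (M^[n] c)) :
    Subadditive fun n => ⨆ c, s n c := fun n m =>
  have hbdd k : BddAbove (range (s k)) := (isCompact_range (hcont k)).bddAbove
  ciSup_le fun c => (hsub n m c).trans (add_le_add (le_ciSup (hbdd n) c) (le_ciSup (hbdd m) _))

theorem iInf_iSup_div_eq_lim (hcont : ∀ n, Continuous (s n))
    (hsub : ∀ n m c, s (n + m) c ≤ s n c + s m (M^[n] c)) :
    ⨅ n : {m : ℕ // 1 ≤ m}, ⨆ c, s n.1 c / (n.1 : ℝ) = (subadditive_iSup hcont hsub).lim := by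
  rw [Subadditive.lim, sInf_image']
  refine iInf_congr fun n => ?_
  simp_rw [div_eq_mul_inv]
  exact (Real.iSup_mul_of_nonneg (by positivity) _).symm

theorem tendsto_iSup_div (hcont : ∀ n, Continuous (s n)) (h0 : ∀ n c, 0 ≤ s n c)
    (hsub : ∀ n m c, s (n + m) c ≤ s n c + s m (M^[n] c)) :
    Tendsto (fun n : ℕ => (⨆ c, s n c) / n) atTop
      (𝓝 (⨅ n : {m : ℕ // 1 ≤ m}, ⨆ c, s n.1 c / (n.1 : ℝ))) :=
  iInf_iSup_div_eq_lim hcont hsub ▸ (subadditive_iSup hcont hsub).tendsto_lim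
    (bddBelow_range_iSup_div h0)

theorem iInf_iSup_div_mul_le_iSup (hcont : ∀ n, Continuous (s n)) (h0 : ∀ n c, 0 ≤ s n c)
    (hsub : ∀ n m c, s (n + m) c ≤ s n c + s m (M^[n] c)) (n : ℕ) :
    (⨅ n : {m : ℕ // 1 ≤ m}, ⨆ c, s n.1 c / (n.1 : ℝ)) * n ≤ ⨆ c, s n c := by
  rcases eq_or_ne n 0 with rfl | hn
  · simpa using Real.iSup_nonneg (h0 0)
  rw [iInf_iSup_div_eq_lim hcont hsub, ← le_div_iff₀ (by positivity)]
  exact (subadditive_iSup hcont hsub).lim_le_div (bddBelow_range_iSup_div h0) hn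

theorem exists_forall_mul_le_apply (hcont : ∀ n, Continuous (s n))
    (hint : ∀ n c, ∃ z : ℤ, s n c = z) (hsub : ∀ n m c, s (n + m) c ≤ s n c + s m (M^[n] c))
    {α : ℝ} (hαu : ∀ n : ℕ, α * n ≤ ⨆ c, s n c) :
    ∃ c, ∀ n : ℕ, α * n ≤ s n c := by
  have huint n : ∃ z : ℤ, (⨆ c, s n c) = z := by
    obtain ⟨c, hc⟩ := (hcont n).exists_apply_eq_iSup
    rw [← hc]; exact hint n c
  have hfinite K : ∃ c, ∀ k ≤ K, α * k ≤ s k c := by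
    obtain ⟨N, hKN, hN⟩ := exists_ge_forall_mul_le_sub huint hαu K
    obtain ⟨c, hc⟩ := (hcont N).exists_apply_eq_iSup
    refine ⟨c, fun k hk => ?_⟩
    have hsplit := hsub k (N - k) c
    rw [Nat.add_sub_cancel' (hk.trans hKN), hc] at hsplit
    linarith [hN k hk, le_ciSup (isCompact_range (hcont (N - k))).bddAbove (M^[k] c)]
  have hinter := isCompact_univ.inter_iInter_nonempty (fun n : ℕ => {c | α * n ≤ s n c})
    (fun n => isClosed_le continuous_const (hcont n)) fun t => by
      obtain ⟨c, hc⟩ := hfinite (t.sup id)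
      exact ⟨c, mem_univ c, mem_iInter₂.2 fun k hk => hc k (Finset.le_sup (f := id) hk)⟩
  obtain ⟨c, -, hc⟩ := hinter
  exact ⟨c, mem_iInter.1 hc⟩

end Cocycle

theorem exists_config_of_maximal_speed_general
    {X : Type*} [MetricSpace X] [CompactSpace X] [Nonempty X]
    (M : X → X)
    (s : ℕ → X → ℝ) (hcont : ∀ n, Continuous (s n))
    (hint : ∀ n c, ∃ z : ℤ, s n c = z)
    (h0 : ∀ n c, 0 ≤ s n c)
    (hsub : ∀ n m c, s (n + m) c ≤ s n c + s m (M^[n] c))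
    (α : ℝ) (hα : α = ⨅ n : {m : ℕ // 1 ≤ m}, ⨆ c : X, s n.1 c / (n.1 : ℝ)) :
    ∃ c : X, (∀ n : ℕ, α * n ≤ s n c) ∧
      Filter.liminf (fun n : ℕ => s n c / n) Filter.atTop = α ∧
      (⨆ c' : X, Filter.liminf (fun n : ℕ => s n c' / n) Filter.atTop) = α := by
  have hs_le_iSup n c : s n c ≤ ⨆ c, s n c := le_ciSup (isCompact_range (hcont n)).bddAbove c
  have hs_div_le n c : s n c / n ≤ (⨆ c, s n c) / n :=
    div_le_div_of_nonneg_right (hs_le_iSup n c) n.cast_nonneg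
  have hlim := tendsto_iSup_div hcont h0 hsub
  rw [← hα] at hlim
  obtain ⟨c, hc⟩ := exists_forall_mul_le_apply hcont hint hsub
    (hα ▸ iInf_iSup_div_mul_le_iSup hcont h0 hsub)
  have hspeed : Tendsto (fun n => s n c / n) atTop (𝓝 α) := by
    refine tendsto_of_tendsto_of_tendsto_of_le_of_le' tendsto_const_nhds hlim ?_
      (Eventually.of_forall fun n => hs_div_le n c)
    filter_upwards [eventually_ge_atTop 1] with n hn
    exact (le_div_iff₀ (by positivity)).2 (hc n)
  have hliminf_le c' : liminf (fun n => s n c' / n) atTop ≤ α :=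
    hlim.liminf_eq ▸ liminf_le_liminf (Eventually.of_forall fun n => hs_div_le n c')
      (isBoundedUnder_of ⟨0, fun n => div_nonneg (h0 n c') n.cast_nonneg⟩)
      hlim.isCoboundedUnder_ge
  refine ⟨c, hc, hspeed.liminf_eq, le_antisymm (ciSup_le hliminf_le) ?_⟩
  exact hspeed.liminf_eq ▸ le_ciSup ⟨α, forall_mem_range.2 hliminf_le⟩ c

/-- Existence of a configuration of maximal speed for a continuous integer-valued
subadditive cocycle on a compact metric space. -/
theorem exists_config_of_maximal_speed
    {X : Type*} [MetricSpace X] [CompactSpace X] [Nonempty X]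
    (M : X → X) (hM : Continuous M)
    (s : ℕ → X → ℝ) (hcont : ∀ n, Continuous (s n))
    (hint : ∀ n c, ∃ z : ℤ, s n c = z)
    (h0 : ∀ n c, 0 ≤ s n c) (h1 : ∀ n c, s n c ≤ n)
    (hsub : ∀ n m c, s (n + m) c ≤ s n c + s m (M^[n] c))
    (α : ℝ) (hα : α = ⨅ n : {m : ℕ // 1 ≤ m}, ⨆ c : X, s n.1 c / (n.1 : ℝ)) :
    ∃ c : X, (∀ n : ℕ, α * n ≤ s n c) ∧
      Filter.liminf (fun n : ℕ => s n c / n) Filter.atTop = α ∧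
      (⨆ c' : X, Filter.liminf (fun n : ℕ => s n c' / n) Filter.atTop) = α :=
  exists_config_of_maximal_speed_general M s hcont hint h0 hsub α hα
end

section
/- Let G = (V, w) be a finite directed graph with positive integer edge-source weights w : V → ℕ, w(v) ≥ 1, in which every vertex lies on a path from a designated set and the graph contains at least one cycle. Then sup over infinite paths p = (v_0, v_1, ...) of limsup_n n / (∑_{i<n} w(v_i)) equals 1 / μ*, where μ* is the minimum over cycles C of (∑_{v ∈ C} w(v)) / |C| (minimum mean cycle weight), and the supremum is attained by an eventually periodic path following a minimum-mean cycle. -/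
/-!
Let `μ` be the least mean weight of a cycle of length at most `|V|`. Among the first `|V| + 1`
vertices of any walk two coincide; cutting out the cycle between them leaves a shorter walk, so by
induction every walk satisfies `∑_{k<n} w(p k) ≥ μ (n - |V|)`. Applied to a cycle traversed `j`
times this shows that `μ` is the minimum mean over all cycles, and it bounds `n / ∑_{k<n} w(p k)`
asymptotically by `1 / μ`. Going around a minimum-mean cycle attains `1 / μ` at every multiple of
its length.
-/

open Finset Filter Topology Function

section Walks

variable {V : Type*} {E : V → V → Prop}

def IsInfiniteWalk (E : V → V → Prop) (p : ℕ → V) : Prop := ∀ i, E (p i) (p (i + 1))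

def IsCycle (E : V → V → Prop) (c : ℕ → V) (m : ℕ) : Prop :=
  0 < m ∧ Periodic c m ∧ IsInfiniteWalk E c

noncomputable def cycleMean (f : V → ℝ) (c : ℕ → V) (m : ℕ) : ℝ := (∑ k ∈ range m, f (c k)) / m

def cutOut (p : ℕ → V) (i m : ℕ) : ℕ → V := fun k => if k < i then p k else p (k + m)

def loopAt (p : ℕ → V) (i m : ℕ) : ℕ → V := fun k => p (i + k % m)

lemma Function.Periodic.sum_range_mul {M : Type*} [AddCommMonoid M] {g : ℕ → M} {m : ℕ}
    (hg : Periodic g m) (j : ℕ) : ∑ k ∈ range (j * m), g k = j • ∑ k ∈ range m, g k := by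
  induction j with
  | zero => simp
  | succ j ih =>
    rw [Nat.succ_mul, sum_range_add, ih, succ_nsmul]
    congr 1
    refine sum_congr rfl fun k _ => ?_
    rw [add_comm]
    simpa using hg.nat_mul j k

lemma Function.Periodic.isInfiniteWalk {c : ℕ → V} {m : ℕ} (hc : Periodic c m) (hm : 0 < m)
    (h : ∀ k < m, E (c k) (c (k + 1))) : IsInfiniteWalk E c := by
  intro k
  have hk : k + 1 = k % m + 1 + k / m * m := by have := Nat.mod_add_div' k m; omega
  have hshift := hc.nat_mul (k / m) (k % m + 1)
  rw [Nat.cast_id] at hshift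
  rw [← hc.map_mod_nat k, hk, hshift]
  exact h _ (Nat.mod_lt k hm)

lemma periodic_loopAt (p : ℕ → V) (i m : ℕ) : Periodic (loopAt p i m) m := fun k => by
  simp [loopAt]

lemma sum_range_loopAt {M : Type*} [AddCommMonoid M] (f : V → M) (p : ℕ → V) (i m : ℕ) :
    ∑ k ∈ range m, f (loopAt p i m k) = ∑ k ∈ range m, f (p (i + k)) :=
  sum_congr rfl fun k hk => by rw [loopAt, Nat.mod_eq_of_lt (mem_range.1 hk)]

lemma sum_range_cutOut {M : Type*} [AddCommMonoid M] (f : V → M) (p : ℕ → V) (i m r : ℕ) :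
    ∑ k ∈ range (i + m + r), f (p k) =
      ∑ k ∈ range (i + r), f (cutOut p i m k) + ∑ k ∈ range m, f (p (i + k)) := by
  have hhead : ∑ k ∈ range i, f (cutOut p i m k) = ∑ k ∈ range i, f (p k) :=
    sum_congr rfl fun k hk => by rw [cutOut, if_pos (mem_range.1 hk)]
  have htail : ∑ k ∈ range r, f (cutOut p i m (i + k)) = ∑ k ∈ range r, f (p (i + m + k)) :=
    sum_congr rfl fun k _ => by rw [cutOut, if_neg (by omega), Nat.add_right_comm]
  rw [sum_range_add, sum_range_add, sum_range_add, hhead, htail, add_right_comm]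

namespace IsInfiniteWalk

variable {p : ℕ → V} {i m : ℕ}

lemma cutOut (hp : IsInfiniteWalk E p) (h : p i = p (i + m)) :
    IsInfiniteWalk E (cutOut p i m) := by
  intro k
  simp only [_root_.cutOut]
  rcases lt_trichotomy (k + 1) i with hk | rfl | hk
  · rw [if_pos hk, if_pos (by omega)]
    exact hp k
  · rw [if_pos (by omega), if_neg (lt_irrefl _), ← h]
    exact hp k
  · rw [if_neg (by omega), if_neg (by omega), Nat.add_right_comm]
    exact hp _

lemma isCycle_loopAt (hp : IsInfiniteWalk E p) (hm : 0 < m) (h : p i = p (i + m)) :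
    IsCycle E (loopAt p i m) m := by
  refine ⟨hm, periodic_loopAt p i m, (periodic_loopAt p i m).isInfiniteWalk hm fun k hk => ?_⟩
  simp only [loopAt, Nat.mod_eq_of_lt hk]
  rcases (Nat.succ_le_of_lt hk).eq_or_lt with hk' | hk'
  · rw [← hk', Nat.mod_self, add_zero, h, ← hk']
    exact hp (i + k)
  · rw [Nat.mod_eq_of_lt hk']
    exact hp (i + k)

end IsInfiniteWalk

lemma IsCycle.le_cycleMean_iff {f : V → ℝ} {μ : ℝ} {c : ℕ → V} {m : ℕ} (hc : IsCycle E c m) :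
    μ ≤ cycleMean f c m ↔ μ * m ≤ ∑ k ∈ range m, f (c k) :=
  le_div_iff₀ (Nat.cast_pos.2 hc.1)


end Walks

section Fintype

variable {V : Type*} [Fintype V] {E : V → V → Prop} {f : V → ℝ} {μ : ℝ}

lemma exists_eq_add_le_card (p : ℕ → V) :
    ∃ i m, 0 < m ∧ i + m ≤ Fintype.card V ∧ p i = p (i + m) := by
  obtain ⟨a, b, hab, h⟩ := Fintype.exists_ne_map_eq_of_card_lt
    (fun t : Fin (Fintype.card V + 1) => p t) (by simp)
  rcases Nat.lt_or_gt_of_ne (Fin.val_ne_of_ne hab) with hlt | hlt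
  · exact ⟨a, b - a, by omega, by omega, by rwa [Nat.add_sub_cancel' hlt.le]⟩
  · exact ⟨b, a - b, by omega, by omega, by rw [Nat.add_sub_cancel' hlt.le]; exact h.symm⟩

lemma IsInfiniteWalk.exists_isCycle_le_card {p : ℕ → V} (hp : IsInfiniteWalk E p) :
    ∃ c m, IsCycle E c m ∧ m ≤ Fintype.card V := by
  obtain ⟨i, m, hm, hmN, h⟩ := exists_eq_add_le_card p
  exact ⟨_, m, hp.isCycle_loopAt hm h, by omega⟩

lemma IsInfiniteWalk.mul_le_sum_add (hf : 0 ≤ f) (hμ : 0 ≤ μ)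
    (hshort : ∀ c m, IsCycle E c m → m ≤ Fintype.card V → μ ≤ cycleMean f c m)
    {p : ℕ → V} (hp : IsInfiniteWalk E p) (n : ℕ) :
    μ * n ≤ ∑ k ∈ range n, f (p k) + μ * Fintype.card V := by
  induction n using Nat.strong_induction_on generalizing p with
  | _ n ih =>
  by_cases hn : n ≤ Fintype.card V
  · have hsum : 0 ≤ ∑ k ∈ range n, f (p k) := sum_nonneg fun k _ => hf _
    have : μ * n ≤ μ * Fintype.card V := by gcongr
    linarith
  obtain ⟨i, m, hm, hmN, h⟩ := exists_eq_add_le_card p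
  obtain ⟨r, rfl⟩ : ∃ r, n = i + m + r := ⟨n - (i + m), by omega⟩
  have hcut := ih (i + r) (by omega) (hp.cutOut h)
  have hloop := (hp.isCycle_loopAt hm h).le_cycleMean_iff.1
    (hshort _ m (hp.isCycle_loopAt hm h) (by omega))
  rw [sum_range_loopAt] at hloop
  rw [sum_range_cutOut f p i m r]
  push_cast at hcut ⊢
  linarith

lemma IsCycle.mul_le_sum (hf : 0 ≤ f) (hμ : 0 ≤ μ)
    (hshort : ∀ c m, IsCycle E c m → m ≤ Fintype.card V → μ ≤ cycleMean f c m)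
    {c : ℕ → V} {m : ℕ} (hc : IsCycle E c m) : μ ≤ cycleMean f c m := by
  rw [hc.le_cycleMean_iff]
  set S := ∑ k ∈ range m, f (c k)
  have hrepeat (j : ℕ) : j * (μ * m - S) ≤ μ * Fintype.card V := by
    have hsum : ∑ k ∈ range (j * m), f (c k) = j * S := by
      rw [← nsmul_eq_mul]
      exact (hc.2.1.comp f).sum_range_mul j
    have := hc.2.2.mul_le_sum_add hf hμ hshort (j * m)
    rw [hsum] at this
    push_cast at this
    linarith
  by_contra! hlt
  obtain ⟨j, hj⟩ := exists_nat_gt (μ * Fintype.card V / (μ * m - S))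
  rw [div_lt_iff₀ (sub_pos.2 hlt)] at hj
  linarith [hrepeat j]

lemma exists_isCycle_forall_cycleMean_le (hf : 0 ≤ f) (hE : ∃ c m, IsCycle E c m) :
    ∃ c₀ m₀, IsCycle E c₀ m₀ ∧ ∀ c m, IsCycle E c m → cycleMean f c₀ m₀ ≤ cycleMean f c m := by
  set short := {x | ∃ c m, IsCycle E c m ∧ m ≤ Fintype.card V ∧ x = cycleMean f c m}
  have hfin : short.Finite := by
    refine ((Set.finite_Iic (Fintype.card V)).biUnion fun m _ =>
      Set.finite_range fun c : Fin m → V => (∑ k, f (c k)) / m).subset ?_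
    rintro _ ⟨c, m, -, hmN, rfl⟩
    exact Set.mem_biUnion hmN ⟨fun k => c k, by simp [cycleMean, Finset.sum_range]⟩
  obtain ⟨c, m, hc⟩ := hE
  obtain ⟨c', m', hc', hm'N⟩ := hc.2.2.exists_isCycle_le_card
  obtain ⟨_, ⟨c₀, m₀, h₀, -, rfl⟩, hmin⟩ :=
    Set.exists_min_image short id hfin ⟨_, c', m', hc', hm'N, rfl⟩
  refine ⟨c₀, m₀, h₀, fun c m hc => IsCycle.mul_le_sum hf ?_ ?_ hc⟩
  · exact div_nonneg (sum_nonneg fun k _ => hf _) (Nat.cast_nonneg _)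
  · exact fun c m hc hmN => hmin _ ⟨c, m, hc, hmN, rfl⟩

end Fintype

section Speed

variable {S : ℕ → ℝ} {μ C : ℝ}

lemma tendsto_nat_div_mul_sub (hμ : μ ≠ 0) (C : ℝ) :
    Tendsto (fun n : ℕ => (n : ℝ) / (μ * n - C)) atTop (𝓝 μ⁻¹) := by
  have hlim : Tendsto (fun n : ℕ => μ - C / n) atTop (𝓝 μ) := by
    simpa using tendsto_const_nhds.sub (tendsto_const_div_atTop_nhds_zero_nat C)
  refine (hlim.inv₀ hμ).congr' ?_
  filter_upwards [eventually_ne_atTop 0] with n hn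
  field_simp

lemma eventually_nat_div_le (hμ : 0 < μ) (hS : ∀ n, μ * n ≤ S n + C) :
    ∀ᶠ n : ℕ in atTop, (n : ℝ) / S n ≤ n / (μ * n - C) := by
  obtain ⟨N, hN⟩ := exists_nat_gt (C / μ)
  filter_upwards [eventually_gt_atTop N] with n hn
  have hpos : 0 < μ * n - C := by
    rw [div_lt_iff₀ hμ] at hN
    have : (N : ℝ) < n := by exact_mod_cast hn
    nlinarith
  exact div_le_div_of_nonneg_left (Nat.cast_nonneg n) hpos (by linarith [hS n])

lemma isBoundedUnder_nat_div (hμ : 0 < μ) (hS : ∀ n, μ * n ≤ S n + C) :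
    IsBoundedUnder (· ≤ ·) atTop fun n : ℕ => (n : ℝ) / S n :=
  (tendsto_nat_div_mul_sub hμ.ne' C).isBoundedUnder_le.mono_le (eventually_nat_div_le hμ hS)

lemma limsup_nat_div_le (hμ : 0 < μ) (hS0 : ∀ n, 0 ≤ S n) (hS : ∀ n, μ * n ≤ S n + C) :
    limsup (fun n : ℕ => (n : ℝ) / S n) atTop ≤ μ⁻¹ := by
  have hlim := tendsto_nat_div_mul_sub hμ.ne' C
  calc limsup (fun n : ℕ => (n : ℝ) / S n) atTop
      ≤ limsup (fun n : ℕ => (n : ℝ) / (μ * n - C)) atTop :=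
        limsup_le_limsup (eventually_nat_div_le hμ hS)
          (isCoboundedUnder_le_of_le atTop fun n => div_nonneg (Nat.cast_nonneg n) (hS0 n))
          hlim.isBoundedUnder_le
    _ = μ⁻¹ := hlim.limsup_eq

lemma Function.Periodic.inv_mean_le_limsup_nat_div {g : ℕ → ℝ} {m : ℕ} (hg : Periodic g m)
    (hm : 0 < m) (hb : IsBoundedUnder (· ≤ ·) atTop fun n : ℕ => (n : ℝ) / ∑ k ∈ range n, g k) :
    ((∑ k ∈ range m, g k) / m)⁻¹ ≤ limsup (fun n : ℕ => (n : ℝ) / ∑ k ∈ range n, g k) atTop := by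
  refine le_limsup_of_frequently_le (frequently_atTop.2 fun a => ⟨(a + 1) * m, ?_, ?_⟩) hb
  · nlinarith
  · rw [hg.sum_range_mul, nsmul_eq_mul, inv_div]
    push_cast
    rw [mul_div_mul_left _ _ (by positivity)]

end Speed

theorem max_speed_eq_inv_min_mean_cycle_general
    {V : Type*} [Fintype V] (E : V → V → Prop)
    (w : V → ℕ) (hw : ∀ v, 1 ≤ w v)
    (cyc : Set ℝ)
    (hcyc : cyc = {x : ℝ | ∃ m : ℕ, 0 < m ∧ ∃ c : ℕ → V,
      (∀ i, c (i + m) = c i) ∧ (∀ i, E (c i) (c (i + 1))) ∧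
      x = (∑ i ∈ Finset.range m, (w (c i) : ℝ)) / m})
    (hasCycle : cyc.Nonempty) :
    (⨆ p : {p : ℕ → V // ∀ i, E (p i) (p (i + 1))},
        Filter.limsup
          (fun n : ℕ => (n : ℝ) / ∑ i ∈ Finset.range n, (w (p.1 i) : ℝ))
          Filter.atTop) = 1 / sInf cyc ∧
    ∃ p : ℕ → V, (∀ i, E (p i) (p (i + 1))) ∧
      (∃ N T : ℕ, 0 < T ∧ ∀ n, N ≤ n → p (n + T) = p n) ∧
      Filter.limsup
        (fun n : ℕ => (n : ℝ) / ∑ i ∈ Finset.range n, (w (p i) : ℝ))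
        Filter.atTop = 1 / sInf cyc := by
  set f : V → ℝ := fun v => w v
  have hf : 0 ≤ f := fun v => Nat.cast_nonneg _
  obtain ⟨c₀, m₀, h₀, hmin⟩ := exists_isCycle_forall_cycleMean_le (E := E) hf <| by
    obtain ⟨_, m, hm, c, hc, hcw, -⟩ := hcyc ▸ hasCycle
    exact ⟨c, m, hm, hc, hcw⟩
  set μ := cycleMean f c₀ m₀
  have hsInf : sInf cyc = μ := by
    refine IsLeast.csInf_eq ⟨hcyc ▸ ⟨m₀, h₀.1, c₀, h₀.2.1, h₀.2.2, rfl⟩, ?_⟩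
    rw [hcyc]
    rintro _ ⟨m, hm, c, hc, hcw, rfl⟩
    exact hmin c m ⟨hm, hc, hcw⟩
  have hμ : 0 < μ := by
    refine div_pos (sum_pos (fun k _ => ?_) (nonempty_range_iff.2 h₀.1.ne')) (Nat.cast_pos.2 h₀.1)
    exact Nat.cast_pos.2 (hw _)
  have hbound {p : ℕ → V} (hp : IsInfiniteWalk E p) (n : ℕ) :
      μ * n ≤ ∑ k ∈ range n, f (p k) + μ * Fintype.card V :=
    hp.mul_le_sum_add hf hμ.le (fun c m hc _ => hmin c m hc) n
  have hupper {p : ℕ → V} (hp : IsInfiniteWalk E p) :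
      limsup (fun n : ℕ => (n : ℝ) / ∑ k ∈ range n, f (p k)) atTop ≤ μ⁻¹ :=
    limsup_nat_div_le hμ (fun n => sum_nonneg fun k _ => hf (p k)) (hbound hp)
  have hattain : limsup (fun n : ℕ => (n : ℝ) / ∑ k ∈ range n, f (c₀ k)) atTop = μ⁻¹ :=
    (hupper h₀.2.2).antisymm <|
      (h₀.2.1.comp f).inv_mean_le_limsup_nat_div h₀.1 (isBoundedUnder_nat_div hμ (hbound h₀.2.2))
  have : Nonempty {p : ℕ → V // ∀ i, E (p i) (p (i + 1))} := ⟨⟨c₀, h₀.2.2⟩⟩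
  rw [hsInf, one_div]
  refine ⟨(ciSup_le fun p => hupper p.2).antisymm <| le_ciSup_of_le ⟨μ⁻¹, ?_⟩ ⟨c₀, h₀.2.2⟩ hattain.ge,
    c₀, h₀.2.2, ⟨0, m₀, h₀.1, fun n _ => h₀.2.1 n⟩, hattain⟩
  rintro _ ⟨p, rfl⟩
  exact hupper p.2

/-- The maximal average speed over infinite paths in a finite weighted graph
equals the inverse of the minimum mean cycle weight, and is attained by an
eventually periodic path. -/
theorem max_speed_eq_inv_min_mean_cycle
    {V : Type*} [Fintype V] (E : V → V → Prop) [DecidableRel E]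
    (w : V → ℕ) (hw : ∀ v, 1 ≤ w v)
    (cyc : Set ℝ)
    (hcyc : cyc = {x : ℝ | ∃ m : ℕ, 0 < m ∧ ∃ c : ℕ → V,
      (∀ i, c (i + m) = c i) ∧ (∀ i, E (c i) (c (i + 1))) ∧
      x = (∑ i ∈ Finset.range m, (w (c i) : ℝ)) / m})
    (hasCycle : cyc.Nonempty)
    (hreach : ∀ v : V, ∃ p : ℕ → V, (∀ i, E (p i) (p (i + 1))) ∧ ∃ n, p n = v) :
    (⨆ p : {p : ℕ → V // ∀ i, E (p i) (p (i + 1))},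
        Filter.limsup
          (fun n : ℕ => (n : ℝ) / ∑ i ∈ Finset.range n, (w (p.1 i) : ℝ))
          Filter.atTop) = 1 / sInf cyc ∧
    ∃ p : ℕ → V, (∀ i, E (p i) (p (i + 1))) ∧
      (∃ N T : ℕ, 0 < T ∧ ∀ n, N ≤ n → p (n + T) = p n) ∧
      Filter.limsup
        (fun n : ℕ => (n : ℝ) / ∑ i ∈ Finset.range n, (w (p i) : ℝ))
        Filter.atTop = 1 / sInf cyc :=
  max_speed_eq_inv_min_mean_cycle_general E w hw cyc hcyc hasCycle
end
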